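/- Every set of (n+1)(r−1)+1 points in ℝⁿ can be partitioned into r parts whose convex hulls have a common point. -/

import Mathlib

/-!
Sarkaria's proof. Lift each point `aᵢ` to `ŷᵢ = (aᵢ, 1)` and tensor it with the `r` vertices `vⱼ`
of a simplex centred at the origin, whose only linear relations are `∑ μⱼ vⱼ = 0` with `μ`
constant. The `r` points `ŷᵢ ⊗ vⱼ` average to `0`, so Bárány's colorful Carathéodory theorem in
dimension `(n + 1)(r - 1)` picks one `σ(i)` per point with `0 = ∑ cᵢ ŷᵢ ⊗ v_σ(i)` a convex
combination. Grouping by `σ` gives `∑ⱼ (∑_{σ(i) = j} cᵢ ŷᵢ) ⊗ vⱼ = 0`, so the weighted sums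
`∑_{σ(i) = j} cᵢ ŷᵢ` do not depend on `j`: the last coordinate says every class has mass `1 / r`,
and then all classes have the same barycenter.

Colorful Carathéodory (`d + 1` colours in dimension `d`): let `x` have minimal norm among the
convex hulls of all rainbow transversals. If `x ≠ 0`, then `x` is a positive combination of
affinely independent rainbow points on the hyperplane `⟪x, ·⟫ = ‖x‖²`, hence of at most `d` of
them; a colour they miss has a point `s` with `⟪x, s⟫ ≤ 0`, and swapping it in yields a hull
containing both `x` and `s`, hence a point shorter than `x`.
-/

open Finset Module RealInnerProductSpace Set

theorem exists_weights_of_mem_convexHull_range {V κ : Type*} [AddCommGroup V] [Module ℝ V]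
    [Fintype κ] {f : κ → V} {x : V} (hx : x ∈ convexHull ℝ (range f)) :
    ∃ c : κ → ℝ, (∀ i, 0 ≤ c i) ∧ ∑ i, c i = 1 ∧ ∑ i, c i • f i = x := by
  classical
  have hf : range f =
      Fintype.linearCombination ℝ f '' range fun i j => if i = j then 1 else 0 := by
    rw [← range_comp]
    congr 1
    ext i
    simp [Fintype.linearCombination_apply]
  rw [hf, ← LinearMap.image_convexHull, convexHull_basis_eq_stdSimplex] at hx
  obtain ⟨c, ⟨hc0, hc1⟩, rfl⟩ := hx
  exact ⟨c, hc0, hc1, Fintype.linearCombination_apply ..⟩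

section InnerProductSpace

variable {E : Type*} [NormedAddCommGroup E] [InnerProductSpace ℝ E]

theorem exists_inner_nonpos_of_zero_mem_convexHull {s : Set E} (h : (0 : E) ∈ convexHull ℝ s)
    (x : E) : ∃ y ∈ s, ⟪x, y⟫ ≤ 0 := by
  by_contra! hpos
  have h0 : (0 : ℝ) < ⟪x, 0⟫ :=
    convexHull_min hpos (convex_halfSpace_gt (innerₛₗ ℝ x).isLinear 0) h
  simp at h0

theorem sq_norm_le_inner_of_isMinOn_norm {K : Set E} (hK : Convex ℝ K) {x y : E} (hx : x ∈ K)
    (hmin : IsMinOn (‖·‖) K x) (hy : y ∈ K) : ‖x‖ ^ 2 ≤ ⟪x, y⟫ := by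
  have hinf : ‖0 - x‖ = ⨅ w : K, ‖0 - (w : E)‖ := by
    simpa using (hmin.iInf_eq hx).symm
  have := (norm_eq_iInf_iff_real_inner_le_zero hK hx).1 hinf y hy
  rw [zero_sub, inner_neg_left, inner_sub_right, real_inner_self_eq_norm_sq] at this
  linarith

variable [FiniteDimensional ℝ E]

theorem AffineIndependent.card_le_finrank_of_inner_eq {ι : Type*} [Fintype ι] {z : ι → E}
    (hz : AffineIndependent ℝ z) {x : E} (hx : x ≠ 0) {c : ℝ} (hc : ∀ i, ⟪x, z i⟫ = c) :
    Fintype.card ι ≤ finrank ℝ E := by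
  have hspan : vectorSpan ℝ (range z) ≤ (ℝ ∙ x)ᗮ := by
    rw [vectorSpan_def, Submodule.span_le]
    rintro _ ⟨_, ⟨i, rfl⟩, _, ⟨j, rfl⟩, rfl⟩
    simp [Submodule.mem_orthogonal_singleton_iff_inner_right, inner_sub_right, hc]
  have hperp := (ℝ ∙ x).finrank_add_finrank_orthogonal
  rw [finrank_span_singleton hx] at hperp
  have := Submodule.finrank_mono hspan
  have := hz.card_le_finrank_succ
  omega

theorem colorful_caratheodory_of_innerProductSpace {ι κ : Type*} [Fintype ι] [Fintype κ]
    (p : ι → κ → E) (hp : ∀ i, (0 : E) ∈ convexHull ℝ (range (p i)))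
    (hcard : finrank ℝ E + 1 ≤ Fintype.card ι) :
    ∃ σ : ι → κ, (0 : E) ∈ convexHull ℝ (range fun i => p i (σ i)) := by
  classical
  have : Nonempty ι := Fintype.card_pos_iff.1 (by omega)
  have : Nonempty κ := by
    obtain ⟨_, j, -⟩ := convexHull_nonempty_iff.1 ⟨0, hp (Classical.arbitrary ι)⟩
    exact ⟨j⟩
  let hull (σ : ι → κ) : Set E := convexHull ℝ (range fun i => p i (σ i))
  obtain ⟨x, hxmem, hxmin⟩ : ∃ x ∈ ⋃ σ, hull σ, IsMinOn (‖·‖) (⋃ σ, hull σ) x :=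
    (isCompact_iUnion fun σ => (finite_range _).isCompact_convexHull ℝ).exists_isMinOn
      (nonempty_iUnion.2 ⟨Classical.arbitrary _, convexHull_nonempty_iff.2 (range_nonempty _)⟩)
      continuous_norm.continuousOn
  obtain ⟨σ, hxσ⟩ := mem_iUnion.1 hxmem
  have hmin (τ : ι → κ) : IsMinOn (‖·‖) (hull τ) x := hxmin.on_subset (subset_iUnion _ τ)
  refine ⟨σ, ?_⟩
  obtain rfl | hx := eq_or_ne x 0
  · exact hxσ
  have hsupp : ∀ y ∈ hull σ, ‖x‖ ^ 2 ≤ ⟪x, y⟫ := fun y =>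
    sq_norm_le_inner_of_isMinOn_norm (convex_convexHull ℝ _) hxσ (hmin σ)
  obtain ⟨ι', _, z, w, hz, hzind, hw0, hw1, hwx⟩ := eq_pos_convex_span_of_mem_convexHull hxσ
  -- `⟪x, ·⟫ ≥ ‖x‖²` on the hull, and `x` is a positive average of the `z k`.
  have hplane : ∀ k, ⟪x, z k⟫ = ‖x‖ ^ 2 := by
    have hle : ∀ k ∈ Finset.univ, w k * ‖x‖ ^ 2 ≤ w k * ⟪x, z k⟫ := fun k _ =>
      mul_le_mul_of_nonneg_left (hsupp _ (subset_convexHull ℝ _ (hz ⟨k, rfl⟩))) (hw0 k).le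
    have heq : ∑ k, w k * ‖x‖ ^ 2 = ∑ k, w k * ⟪x, z k⟫ := by
      rw [← sum_mul, hw1, one_mul, ← real_inner_self_eq_norm_sq]
      nth_rw 2 [← hwx]
      simp [inner_sum, real_inner_smul_right]
    intro k
    exact (mul_left_cancel₀ (hw0 k).ne' ((sum_eq_sum_iff_of_le hle).1 heq k (mem_univ k))).symm
  choose idx hidx using fun k => hz ⟨k, rfl⟩
  obtain ⟨i₀, hi₀⟩ : ∃ i₀, ∀ k, idx k ≠ i₀ := by
    by_contra! hsurj
    have := Fintype.card_le_of_surjective idx hsurj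
    have := hzind.card_le_finrank_of_inner_eq hx hplane
    omega
  obtain ⟨_, ⟨j₀, rfl⟩, hj₀⟩ := exists_inner_nonpos_of_zero_mem_convexHull (hp i₀) x
  set τ := Function.update σ i₀ j₀
  have hxτ : x ∈ hull τ := by
    rw [← hwx]
    refine (convex_convexHull ℝ _).sum_mem (fun k _ => (hw0 k).le) hw1 fun k _ => ?_
    refine subset_convexHull ℝ _ ⟨idx k, ?_⟩
    simp [τ, Function.update_of_ne (hi₀ k), hidx]
  have hj₀τ : p i₀ j₀ ∈ hull τ := subset_convexHull ℝ _ ⟨i₀, by simp [τ]⟩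
  have := sq_norm_le_inner_of_isMinOn_norm (convex_convexHull ℝ _) hxτ (hmin τ) hj₀τ
  exact (hx (by nlinarith [norm_pos_iff.2 hx])).elim

end InnerProductSpace

theorem colorful_caratheodory {V : Type*} [AddCommGroup V] [Module ℝ V] [FiniteDimensional ℝ V]
    {ι κ : Type*} [Fintype ι] [Fintype κ] (p : ι → κ → V)
    (hp : ∀ i, (0 : V) ∈ convexHull ℝ (range (p i))) (hcard : finrank ℝ V + 1 ≤ Fintype.card ι) :
    ∃ σ : ι → κ, (0 : V) ∈ convexHull ℝ (range fun i => p i (σ i)) := by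
  let e : V ≃ₗ[ℝ] EuclideanSpace ℝ (Fin (finrank ℝ V)) := LinearEquiv.ofFinrankEq _ _ (by simp)
  have he (s : Set V) : (0 : V) ∈ convexHull ℝ s ↔ (0 : _) ∈ convexHull ℝ (e '' s) := by
    rw [← LinearEquiv.coe_coe, ← LinearMap.image_convexHull, LinearEquiv.coe_coe, ← map_zero e,
      e.injective.mem_set_image]
  obtain ⟨σ, hσ⟩ := colorful_caratheodory_of_innerProductSpace (fun i j => e (p i j))
    (fun i => by simpa only [range_comp'] using (he _).1 (hp i)) (by simpa using hcard)
  exact ⟨σ, (he _).2 (by simpa only [range_comp'] using hσ)⟩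

section Sarkaria

variable (F : Type*) [AddCommGroup F] [Module ℝ F]

/-- `diffLast F r (Pi.single j y)` plays the role of Sarkaria's `y ⊗ vⱼ`, where `v₀, …, v_r` are
the vertices of a simplex centred at the origin. -/
def diffLast (r : ℕ) : (Fin (r + 1) → F) →ₗ[ℝ] Fin r → F :=
  LinearMap.pi fun k =>
    LinearMap.proj (R := ℝ) (φ := fun _ : Fin (r + 1) => F) k.castSucc - LinearMap.proj (Fin.last r)

variable {F}

theorem diffLast_eq_zero_iff {r : ℕ} {f : Fin (r + 1) → F} :
    diffLast F r f = 0 ↔ ∀ j, f j = f (Fin.last r) := by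
  simp [diffLast, funext_iff, sub_eq_zero, Fin.forall_fin_succ']

theorem exists_partition_weighted_sums_eq [FiniteDimensional ℝ F] {ι : Type*} [Fintype ι]
    (y : ι → F) (r : ℕ) (hcard : r * finrank ℝ F + 1 ≤ Fintype.card ι) :
    ∃ σ : ι → Fin (r + 1), ∃ c : ι → ℝ, (∀ i, 0 ≤ c i) ∧ ∑ i, c i = 1 ∧
      ∀ j, ∑ i with σ i = j, c i • y i = ∑ i with σ i = Fin.last r, c i • y i := by
  classical
  let p (i : ι) (j : Fin (r + 1)) : Fin r → F := diffLast F r (Pi.single j (y i))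
  have hp (i : ι) : (0 : Fin r → F) ∈ convexHull ℝ (range (p i)) := by
    have hsum : ∑ j, p i j = 0 := by
      rw [← map_sum, diffLast_eq_zero_iff, Finset.univ_sum_single]
      simp
    refine mem_convexHull_of_exists_fintype (fun _ => ((r : ℝ) + 1)⁻¹) (p i)
      (fun _ => by positivity) ?_ (fun j => mem_range_self j) (by rw [← smul_sum, hsum, smul_zero])
    rw [sum_const, card_univ, Fintype.card_fin, nsmul_eq_mul]
    push_cast
    field_simp
  obtain ⟨σ, hσ⟩ := colorful_caratheodory p hp (by simpa [Module.finrank_pi_fintype] using hcard)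
  obtain ⟨c, hc0, hc1, hcσ⟩ := exists_weights_of_mem_convexHull_range hσ
  refine ⟨σ, c, hc0, hc1, diffLast_eq_zero_iff.1 ?_⟩
  rw [← hcσ]
  simp only [p, ← map_smul, ← map_sum]
  congr 1
  ext j
  simp [Finset.sum_apply, Pi.single_apply, Finset.sum_filter, eq_comm]

end Sarkaria

theorem exists_tverberg_partition {E : Type*} [AddCommGroup E] [Module ℝ E]
    [FiniteDimensional ℝ E] {ι : Type*} [Fintype ι] (a : ι → E) (r : ℕ)
    (hcard : r * (finrank ℝ E + 1) + 1 ≤ Fintype.card ι) :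
    ∃ σ : ι → Fin (r + 1), (⋂ j, convexHull ℝ (a '' {i | σ i = j})).Nonempty := by
  classical
  obtain ⟨σ, c, hc0, hc1, hsums⟩ := exists_partition_weighted_sums_eq (fun i => (a i, (1 : ℝ))) r
    (by simpa [Module.finrank_prod] using hcard)
  let cls (j : Fin (r + 1)) : Finset ι := univ.filter (σ · = j)
  have hmass (j) : ∑ i ∈ cls j, c i = ∑ i ∈ cls (Fin.last r), c i := by
    simpa [Prod.snd_sum] using congrArg Prod.snd (hsums j)
  have hmoment (j) : ∑ i ∈ cls j, c i • a i = ∑ i ∈ cls (Fin.last r), c i • a i := by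
    simpa [Prod.fst_sum] using congrArg Prod.fst (hsums j)
  have hpos (j) : 0 < ∑ i ∈ cls j, c i := by
    have : ∑ j : Fin (r + 1), ∑ i ∈ cls j, c i = 1 := by rw [sum_fiberwise]; exact hc1
    simp only [hmass, sum_const, card_univ, Fintype.card_fin, nsmul_eq_mul] at this
    push_cast at this
    rw [hmass]
    nlinarith
  refine ⟨σ, (cls (Fin.last r)).centerMass c a, mem_iInter.2 fun j => ?_⟩
  have hcenter : (cls j).centerMass c a = (cls (Fin.last r)).centerMass c a := by
    simp only [Finset.centerMass, hmass j, hmoment j]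
  rw [← hcenter]
  exact centerMass_mem_convexHull _ (fun i _ => hc0 i) (hpos j) fun i hi =>
    ⟨i, by simpa [cls] using hi, rfl⟩

/-- Tverberg's theorem: every set of `(n+1)(r-1)+1` points in `ℝⁿ` can be partitioned into
`r` parts whose convex hulls have a common point. -/
theorem tverberg {n r : ℕ} (hr : 1 ≤ r) (A : Finset (EuclideanSpace ℝ (Fin n)))
    (hA : A.card = (n + 1) * (r - 1) + 1) :
    ∃ σ : EuclideanSpace ℝ (Fin n) → Fin r,
      (⋂ j, convexHull ℝ {x : EuclideanSpace ℝ (Fin n) | x ∈ A ∧ σ x = j}).Nonempty := by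
  classical
  obtain ⟨r, rfl⟩ := Nat.exists_eq_add_of_le' hr
  obtain ⟨σ, hσ⟩ := exists_tverberg_partition ((↑) : A → EuclideanSpace ℝ (Fin n)) r
    (by simp [hA, mul_comm])
  refine ⟨fun x => if hx : x ∈ A then σ ⟨x, hx⟩ else 0, ?_⟩
  convert hσ using 4 with j
  ext x
  by_cases hx : x ∈ A <;> simp [hx]
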